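/- arXiv:2012.03582 — 2 statements merged into one kernel-verified Lean document; each statement's English description precedes it below -/
import Mathlib

section
/- Let p be an evenlevel(v) or oddlevel(v) path, and let u lie on p with tenacity(u) > tenacity(v). Then the length of the prefix p[f to u] equals minlevel(u), the smaller of evenlevel(u) and oddlevel(u). -/
open scoped Classical

universe u

variable {V : Type u}

/-- A finite-or-infinite undirected graph together with a matching. -/
structure MatchedGraph (V : Type u) where
  adj : V → V → Prop
  symm : ∀ u v, adj u v → adj v u
  loopless : ∀ v, ¬ adj v v
  M : V → V → Prop
  M_symm : ∀ u v, M u v → M v u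
  M_sub : ∀ u v, M u v → adj u v
  M_matching : ∀ u v w, M u v → M u w → v = w

namespace MatchedGraph

/-- A vertex is unmatched if no matched edge is incident to it. -/
def unmatched (g : MatchedGraph V) (v : V) : Prop := ∀ u, ¬ g.M v u

/-- `p` is a simple alternating path starting at `b` and ending at `v`,
whose first edge is unmatched and whose edges alternate unmatched/matched.
(The `i`-th edge is matched iff `i` is odd.) -/
def AltPath (g : MatchedGraph V) (p : List V) (b v : V) : Prop :=
  p.head? = some b ∧ p.getLast? = some v ∧ p.Nodup ∧
  ∀ i, i + 1 < p.length →
    g.adj (p.getD i b) (p.getD (i + 1) b) ∧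
      (g.M (p.getD i b) (p.getD (i + 1) b) ↔ i % 2 = 1)

/-- An alternating path from an *unmatched* vertex `f` to `v`. -/
def AltPathFrom (g : MatchedGraph V) (p : List V) (f v : V) : Prop :=
  g.unmatched f ∧ g.AltPath p f v

/-- Minimum length of an even alternating path from an unmatched vertex to `v`. -/
noncomputable def evenlevel (g : MatchedGraph V) (v : V) : ℕ∞ :=
  sInf {n : ℕ∞ | ∃ p f, g.AltPathFrom p f v ∧ Even (p.length - 1) ∧
    n = ((p.length - 1 : ℕ) : ℕ∞)}

/-- Minimum length of an odd alternating path from an unmatched vertex to `v`. -/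
noncomputable def oddlevel (g : MatchedGraph V) (v : V) : ℕ∞ :=
  sInf {n : ℕ∞ | ∃ p f, g.AltPathFrom p f v ∧ Odd (p.length - 1) ∧
    n = ((p.length - 1 : ℕ) : ℕ∞)}

noncomputable def tenacity (g : MatchedGraph V) (v : V) : ℕ∞ :=
  g.evenlevel v + g.oddlevel v

noncomputable def minlevel (g : MatchedGraph V) (v : V) : ℕ∞ :=
  min (g.evenlevel v) (g.oddlevel v)

noncomputable def maxlevel (g : MatchedGraph V) (v : V) : ℕ∞ :=
  max (g.evenlevel v) (g.oddlevel v)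

/-- Minimum length of an augmenting path: an alternating path between two
distinct unmatched vertices. -/
noncomputable def lm (g : MatchedGraph V) : ℕ∞ :=
  sInf {n : ℕ∞ | ∃ p f v, g.AltPathFrom p f v ∧ g.unmatched v ∧ f ≠ v ∧
    n = ((p.length - 1 : ℕ) : ℕ∞)}

/-- Minimum tenacity of any vertex. -/
noncomputable def tm (g : MatchedGraph V) : ℕ∞ := ⨅ v, g.tenacity v

/-- `p` is an `evenlevel(v)` path starting at the unmatched vertex `f`. -/
def IsEvenlevelPath (g : MatchedGraph V) (p : List V) (f v : V) : Prop :=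
  g.AltPathFrom p f v ∧ Even (p.length - 1) ∧
    ((p.length - 1 : ℕ) : ℕ∞) = g.evenlevel v

/-- `p` is an `oddlevel(v)` path starting at the unmatched vertex `f`. -/
def IsOddlevelPath (g : MatchedGraph V) (p : List V) (f v : V) : Prop :=
  g.AltPathFrom p f v ∧ Odd (p.length - 1) ∧
    ((p.length - 1 : ℕ) : ℕ∞) = g.oddlevel v

/-- `p` is a `minlevel(v)` path starting at the unmatched vertex `f`. -/
def IsMinlevelPath (g : MatchedGraph V) (p : List V) (f v : V) : Prop :=
  g.AltPathFrom p f v ∧ ((p.length - 1 : ℕ) : ℕ∞) = g.minlevel v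

/-- `p` is a `maxlevel(v)` path starting at the unmatched vertex `f`. -/
def IsMaxlevelPath (g : MatchedGraph V) (p : List V) (f v : V) : Prop :=
  g.AltPathFrom p f v ∧ ((p.length - 1 : ℕ) : ℕ∞) = g.maxlevel v

/-- The vertex at position `i` of `p` (whose prefix from `f` has length `i`)
is BFS-honest w.r.t. `p`. -/
def BFSHonest (g : MatchedGraph V) (p : List V) (f : V) (i : ℕ) : Prop :=
  (Even i → g.evenlevel (p.getD i f) = (i : ℕ∞)) ∧
  (Odd i → g.oddlevel (p.getD i f) = (i : ℕ∞))

/-- `u` is a predecessor of `v`: `(u, v)` is the last edge of some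
`minlevel(v)` path. -/
def IsPred (g : MatchedGraph V) (u v : V) : Prop :=
  ∃ p f, g.IsMinlevelPath p f v ∧ 2 ≤ p.length ∧ p.getD (p.length - 2) f = u

/-- A prop is an edge which is the last edge of a minlevel path to one of its
endpoints. -/
def IsPropEdge (g : MatchedGraph V) (u v : V) : Prop :=
  g.IsPred u v ∨ g.IsPred v u

/-- A bridge is an edge that is not a prop. -/
def IsBridge (g : MatchedGraph V) (u v : V) : Prop :=
  g.adj u v ∧ ¬ g.IsPropEdge u v

/-- Tenacity of an edge. -/
noncomputable def etenacity (g : MatchedGraph V) (u v : V) : ℕ∞ :=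
  if g.M u v then g.oddlevel u + g.oddlevel v + 1
  else g.evenlevel u + g.evenlevel v + 1

/-- The set `B(v)` of all `F(p, v)`: for each `evenlevel(v)` or `oddlevel(v)`
path `p`, the vertex on `p` farthest from the unmatched endpoint among the
vertices of tenacity greater than `tenacity(v)`. -/
def Bset (g : MatchedGraph V) (v : V) : Set V :=
  {b | ∃ p f i, (g.IsEvenlevelPath p f v ∨ g.IsOddlevelPath p f v) ∧
    i < p.length ∧ b = p.getD i f ∧ g.tenacity v < g.tenacity b ∧
    ∀ k, i < k → k < p.length → g.tenacity (p.getD k f) ≤ g.tenacity v}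

/-- `b` is the (unique) base of `v`. -/
def baseOf (g : MatchedGraph V) (v b : V) : Prop := g.Bset v = {b}

/-- Iterated bases: `iterBase k v b` means `b = base^k(v)` (with `base^0(v) = v`). -/
def iterBase (g : MatchedGraph V) : ℕ → V → V → Prop
  | 0, v, b => v = b
  | k + 1, v, b => ∃ u, g.iterBase k v u ∧ g.baseOf u b

/-- A vertex is outer if `evenlevel(v) < oddlevel(v)`. -/
def IsOuter (g : MatchedGraph V) (v : V) : Prop := g.evenlevel v < g.oddlevel v

/-- A vertex is inner if it is not outer. -/
def IsInner (g : MatchedGraph V) (v : V) : Prop := g.oddlevel v ≤ g.evenlevel v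

/-- The set `S_{b,t}` of vertices of tenacity `t` with base `b`. -/
def Sset (g : MatchedGraph V) (t : ℕ) (b : V) : Set V :=
  {v | g.tenacity v = (t : ℕ∞) ∧ g.baseOf v b}

/-- The blossom `B_{b,t}`, defined recursively. -/
def blossom (g : MatchedGraph V) : ℕ → V → Set V
  | 0, _ => ∅
  | 1, _ => ∅
  | t + 2, b => g.Sset (t + 2) b ∪
      ⋃ v ∈ {v | (v ∈ g.Sset (t + 2) b ∨ v = b) ∧ g.IsOuter v}, blossom g t v

/-- The nesting depth `N(B_{b,t})` of a blossom. -/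
noncomputable def ndepth (g : MatchedGraph V) [Fintype V] : ℕ → V → ℕ
  | 0, _ => 0
  | 1, _ => 0
  | t + 2, b =>
    if (g.Sset (t + 2) b).Nonempty then
      1 + Finset.univ.sup (fun v =>
        if (v ∈ g.Sset (t + 2) b ∨ v = b) ∧ g.IsOuter v then ndepth g t v else 0)
    else ndepth g t b

/-- `evenlevel(b; v)`: minimum even length of an alternating path from `b` to
`v` starting with an unmatched edge. -/
noncomputable def evenlevelFrom (g : MatchedGraph V) (b v : V) : ℕ∞ :=
  sInf {n : ℕ∞ | ∃ p, g.AltPath p b v ∧ Even (p.length - 1) ∧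
    n = ((p.length - 1 : ℕ) : ℕ∞)}

/-- `oddlevel(b; v)`: minimum odd length of an alternating path from `b` to
`v` starting with an unmatched edge. -/
noncomputable def oddlevelFrom (g : MatchedGraph V) (b v : V) : ℕ∞ :=
  sInf {n : ℕ∞ | ∃ p, g.AltPath p b v ∧ Odd (p.length - 1) ∧
    n = ((p.length - 1 : ℕ) : ℕ∞)}

end MatchedGraph

/-!
Write `L` for the length of `p`, `u = p i`, and `ℓₙ(u)` for the level of `u` of the parity of `n`
(`parityLevel n u`). The prefix of `p` gives `ℓᵢ(u) ≤ i`. Everything else comes from one splicing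
argument: an alternating path from an unmatched vertex that ends on `p i, …, p L` can be followed
up to its first vertex `p k` on that segment and then continued along `p`, forwards to `v` if the
parities at the junction agree and backwards to `u` otherwise. Since `p` is a shortest path of its
parity to `v`, splicing a path realising the other level of `v` gives `tenacity v ≥ L + i` or
`tenacity v ≥ ℓᵢ₊₁(u) + i`, and splicing a shorter same-parity path to `u` gives
`tenacity u < L + i`. Together with `tenacity u > tenacity v` this forces `ℓᵢ(u) = i` and
`ℓᵢ₊₁(u) ≥ i`, so `minlevel u = i`.
-/

namespace MatchedGraph

/-- An `AltPath` read as an index function `φ 0, …, φ n`, with a phase `s` that changes when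
segments are shifted, reversed or spliced. -/
def IsAltSeq (g : MatchedGraph V) (φ : ℕ → V) (n s : ℕ) : Prop :=
  Set.InjOn φ (Set.Iic n) ∧
    ∀ t < n, g.adj (φ t) (φ (t + 1)) ∧ (g.M (φ t) (φ (t + 1)) ↔ (s + t) % 2 = 1)

noncomputable def parityLevel (g : MatchedGraph V) (n : ℕ) (v : V) : ℕ∞ :=
  if Even n then g.evenlevel v else g.oddlevel v

variable {g : MatchedGraph V}

namespace IsAltSeq

variable {φ ψ : ℕ → V} {m n s : ℕ}

lemma mono (h : g.IsAltSeq φ n s) (hm : m ≤ n) : g.IsAltSeq φ m s :=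
  ⟨h.1.mono (Set.Iic_subset_Iic.mpr hm), fun t ht => h.2 t (by omega)⟩

lemma of_mod_two_eq {s' : ℕ} (h : g.IsAltSeq φ n s) (hs : s % 2 = s' % 2) :
    g.IsAltSeq φ n s' :=
  ⟨h.1, fun t ht => (h.2 t ht).imp_right fun hM => by rw [hM]; omega⟩

lemma shift (h : g.IsAltSeq φ n s) (k : ℕ) (hk : k + m ≤ n) :
    g.IsAltSeq (fun a => φ (k + a)) m (s + k) := by
  refine ⟨fun a ha b hb hab => ?_, fun t ht => ?_⟩
  · simp only [Set.mem_Iic] at ha hb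
    have := h.1 (show k + a ∈ Set.Iic n from Set.mem_Iic.mpr (by omega))
      (show k + b ∈ Set.Iic n from Set.mem_Iic.mpr (by omega)) hab
    omega
  · simpa only [← add_assoc] using (h.2 (k + t) (by omega)).imp_right fun hM => by
      rw [hM]; omega

lemma reverse (h : g.IsAltSeq φ n s) : g.IsAltSeq (fun a => φ (n - a)) n (s + n + 1) := by
  refine ⟨fun a ha b hb hab => ?_, fun t ht => ?_⟩
  · have := h.1 (show n - a ∈ Set.Iic n from Set.mem_Iic.mpr (by omega))
      (show n - b ∈ Set.Iic n from Set.mem_Iic.mpr (by omega)) hab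
    simp only [Set.mem_Iic] at ha hb
    omega
  · obtain ⟨hadj, hM⟩ := h.2 (n - (t + 1)) (by omega)
    rw [show n - (t + 1) + 1 = n - t by omega] at hadj hM
    refine ⟨g.symm _ _ hadj, ⟨fun h' => ?_, fun h' => g.M_symm _ _ (hM.mpr (by omega))⟩⟩
    have := hM.mp (g.M_symm _ _ h')
    omega

lemma append (hφ : g.IsAltSeq φ m s) (hψ : g.IsAltSeq ψ n (s + m)) (hjoin : φ m = ψ 0)
    (hdisj : ∀ a < m, ∀ b ≤ n, φ a ≠ ψ b) :
    ∃ χ, g.IsAltSeq χ (m + n) s ∧ χ 0 = φ 0 ∧ χ (m + n) = ψ n := by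
  set χ : ℕ → V := fun a => if a ≤ m then φ a else ψ (a - m)
  have hχφ : ∀ a ≤ m, χ a = φ a := fun a ha => if_pos ha
  have hχψ : ∀ b ≤ n, χ (m + b) = ψ b := by
    intro b hb
    rcases Nat.eq_zero_or_pos b with rfl | hb0
    · simpa using (hχφ m le_rfl).trans hjoin
    · simp only [χ, if_neg (show ¬ m + b ≤ m by omega), Nat.add_sub_cancel_left]
  have hsplit : ∀ a ≤ m + n, a < m ∨ ∃ b ≤ n, a = m + b := fun a ha =>
    (lt_or_ge a m).imp_right fun ham => ⟨a - m, by omega, by omega⟩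
  refine ⟨χ, ⟨fun a ha b hb hab => ?_, fun t ht => ?_⟩, hχφ 0 (Nat.zero_le _), hχψ n le_rfl⟩
  · simp only [Set.mem_Iic] at ha hb
    rcases hsplit a ha with ha' | ⟨a, ha', rfl⟩ <;> rcases hsplit b hb with hb' | ⟨b, hb', rfl⟩
    · rw [hχφ a ha'.le, hχφ b hb'.le] at hab
      exact hφ.1 (Set.mem_Iic.mpr ha'.le) (Set.mem_Iic.mpr hb'.le) hab
    · exact absurd (by rwa [hχφ a ha'.le, hχψ b hb'] at hab) (hdisj a ha' b hb')
    · exact absurd (by rwa [hχφ b hb'.le, hχψ a ha'] at hab) (hdisj b hb' a ha').symm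
    · rw [hχψ a ha', hχψ b hb'] at hab
      rw [hψ.1 (Set.mem_Iic.mpr ha') (Set.mem_Iic.mpr hb') hab]
  · rcases hsplit t ht.le with ht' | ⟨b, hb, rfl⟩
    · rw [hχφ t ht'.le, hχφ (t + 1) ht']
      exact hφ.2 t ht'
    · rw [hχψ b hb, add_assoc, hχψ (b + 1) (by omega), ← add_assoc]
      exact hψ.2 b (by omega)

lemma altPath (h : g.IsAltSeq φ n 0) :
    g.AltPath ((List.range (n + 1)).map φ) (φ 0) (φ n) := by
  refine ⟨by simp [List.head?_range], by simp [List.getLast?_range], ?_, fun t ht => ?_⟩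
  · exact List.Nodup.map_on (fun a ha b hb => h.1 (by simpa [Nat.lt_succ_iff] using ha)
      (by simpa [Nat.lt_succ_iff] using hb)) List.nodup_range
  · simp only [List.length_map, List.length_range] at ht
    rw [List.getD_eq_getElem _ _ (by simp; omega), List.getD_eq_getElem _ _ (by simp; omega)]
    simpa using h.2 t (by omega)

end IsAltSeq

namespace AltPath

variable {p : List V} {b v : V}

lemma length_pos (h : g.AltPath p b v) : 0 < p.length :=
  List.length_pos_iff.mpr fun hp => by subst hp; exact absurd h.1 (by simp)

lemma getD_zero (h : g.AltPath p b v) : p.getD 0 b = b := by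
  cases p with
  | nil => exact absurd h.1 (by simp)
  | cons a l => simpa using h.1

lemma getD_length_sub_one (h : g.AltPath p b v) : p.getD (p.length - 1) b = v := by
  have hp : p ≠ [] := List.ne_nil_of_length_pos h.length_pos
  rw [List.getD_eq_getElem _ _ (by have := h.length_pos; omega), ← List.getLast_eq_getElem hp]
  exact Option.some_injective _ ((List.getLast?_eq_some_getLast hp).symm.trans h.2.1)

lemma isAltSeq (h : g.AltPath p b v) : g.IsAltSeq (p.getD · b) (p.length - 1) 0 := by
  refine ⟨fun a ha c hc hac => ?_, fun t ht => by simpa using h.2.2.2 t (by omega)⟩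
  simp only [Set.mem_Iic] at ha hc
  have := h.length_pos
  simp only [List.getD_eq_getElem _ _ (show a < p.length by omega),
    List.getD_eq_getElem _ _ (show c < p.length by omega)] at hac
  exact h.2.2.1.getElem_inj_iff.mp hac

end AltPath

lemma parityLevel_eq_of_mod_two_eq (g : MatchedGraph V) {m n : ℕ} (h : m % 2 = n % 2)
    (v : V) : g.parityLevel m v = g.parityLevel n v := by
  simp only [parityLevel, Nat.even_iff, h]

lemma parityLevel_add_parityLevel_succ (g : MatchedGraph V) (n : ℕ) (v : V) :
    g.parityLevel n v + g.parityLevel (n + 1) v = g.tenacity v := by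
  rcases Nat.even_or_odd n with hn | hn
  · simp [parityLevel, tenacity, hn, Nat.even_add_one]
  · simp [parityLevel, tenacity, hn, Nat.not_even_iff_odd.mpr hn, add_comm]

lemma minlevel_eq_min_parityLevel (g : MatchedGraph V) (n : ℕ) (v : V) :
    g.minlevel v = min (g.parityLevel n v) (g.parityLevel (n + 1) v) := by
  rcases Nat.even_or_odd n with hn | hn
  · simp [parityLevel, minlevel, hn, Nat.even_add_one]
  · simp [parityLevel, minlevel, hn, Nat.not_even_iff_odd.mpr hn, min_comm]

lemma parityLevel_le {φ : ℕ → V} {n : ℕ} (h0 : g.unmatched (φ 0)) (h : g.IsAltSeq φ n 0) :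
    g.parityLevel n (φ n) ≤ n := by
  have hp : g.AltPathFrom _ (φ 0) (φ n) := ⟨h0, h.altPath⟩
  have hlen : ((List.range (n + 1)).map φ).length - 1 = n := by simp
  unfold parityLevel
  split_ifs with hn
  · exact sInf_le ⟨_, _, hp, by rwa [hlen], by rw [hlen]⟩
  · exact sInf_le ⟨_, _, hp, by rw [hlen]; exact Nat.not_even_iff_odd.mp hn, by rw [hlen]⟩

lemma exists_isAltSeq_of_parityLevel_eq {n j : ℕ} {v : V} (h : g.parityLevel n v = j) :
    ∃ φ, g.unmatched (φ 0) ∧ g.IsAltSeq φ j 0 ∧ φ j = v ∧ j % 2 = n % 2 := by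
  suffices ∃ p f, g.AltPathFrom p f v ∧ p.length - 1 = j ∧ j % 2 = n % 2 by
    obtain ⟨p, f, ⟨hf, hp⟩, rfl, hj⟩ := this
    exact ⟨(p.getD · f), show g.unmatched (p.getD 0 f) by rwa [hp.getD_zero], hp.isAltSeq,
      hp.getD_length_sub_one, hj⟩
  have mem : ∀ {S : Set ℕ∞}, sInf S = j → (j : ℕ∞) ∈ S := fun hS =>
    hS ▸ csInf_mem (Set.nonempty_iff_ne_empty.mpr fun he => by simp [he] at hS)
  unfold parityLevel at h
  split_ifs at h with hn
  · obtain ⟨p, f, hp, hpar, hj⟩ := mem h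
    have hj : p.length - 1 = j := by exact_mod_cast hj.symm
    exact ⟨p, f, hp, hj, by rw [← hj, Nat.even_iff.mp hpar, Nat.even_iff.mp hn]⟩
  · obtain ⟨p, f, hp, hpar, hj⟩ := mem h
    have hj : p.length - 1 = j := by exact_mod_cast hj.symm
    exact ⟨p, f, hp, hj, by
      rw [← hj, Nat.odd_iff.mp hpar, Nat.odd_iff.mp (Nat.not_even_iff_odd.mp hn)]⟩

lemma parityLevel_eq_of_isEvenlevelPath_or_isOddlevelPath {p : List V} {f v : V}
    (hp : g.IsEvenlevelPath p f v ∨ g.IsOddlevelPath p f v) :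
    g.parityLevel (p.length - 1) v = (p.length - 1 : ℕ) := by
  rcases hp with ⟨-, hpar, hlen⟩ | ⟨-, hpar, hlen⟩
  · simp [parityLevel, hpar, hlen]
  · simp [parityLevel, Nat.not_even_iff_odd.mpr hpar, hlen]

variable {p c : ℕ → V} {L i N : ℕ}

/-- Follow `c` until it first meets `p i, …, p L`, say at `c m = p k`, then continue along `p`:
forwards to `p L` if the phases agree (`k ≡ m`), backwards to `p i` otherwise. -/
lemma exists_hit_parityLevel_le (hp : g.IsAltSeq p L 0) (hc0 : g.unmatched (c 0))
    (hc : g.IsAltSeq c N 0) (hit : ∃ t, i ≤ t ∧ t ≤ L ∧ c N = p t) :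
    ∃ m ≤ N, ∃ k, i ≤ k ∧ k ≤ L ∧ c m = p k ∧
      (k % 2 = m % 2 ∧ g.parityLevel L (p L) ≤ (m + (L - k) : ℕ) ∨
        k % 2 ≠ m % 2 ∧ g.parityLevel (i + 1) (p i) ≤ (m + (k - i) : ℕ)) := by
  have hex : ∃ m, ∃ k, i ≤ k ∧ k ≤ L ∧ c m = p k := ⟨N, hit⟩
  obtain ⟨k, hik, hkL, hmk⟩ := Nat.find_spec hex
  set m := Nat.find hex
  have hmN : m ≤ N := Nat.find_min' hex hit
  have hfirst : ∀ a < m, ∀ t, i ≤ t → t ≤ L → c a ≠ p t :=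
    fun a ha t hti htL he => Nat.find_min hex ha ⟨t, hti, htL, he⟩
  refine ⟨m, hmN, k, hik, hkL, hmk, ?_⟩
  have hcm := hc.mono hmN
  by_cases hpar : k % 2 = m % 2
  · refine .inl ⟨hpar, ?_⟩
    obtain ⟨χ, hχ, hχ0, hχend⟩ := hcm.append
      ((hp.shift k (m := L - k) (by omega)).of_mod_two_eq (by omega)) (by simpa using hmk)
      (fun a ha b _ => hfirst a ha _ (by omega) (by omega))
    have := parityLevel_le (hχ0 ▸ hc0) hχ
    rwa [hχend, show k + (L - k) = L by omega,
      parityLevel_eq_of_mod_two_eq g (show (m + (L - k)) % 2 = L % 2 by omega)] at this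
  · refine .inr ⟨hpar, ?_⟩
    obtain ⟨χ, hχ, hχ0, hχend⟩ := hcm.append
      (((hp.shift i (m := k - i) (by omega)).reverse).of_mod_two_eq (by omega))
      (by simpa [show i + (k - i) = k by omega] using hmk)
      (fun a ha b _ => hfirst a ha _ (by omega) (by omega))
    have := parityLevel_le (hχ0 ▸ hc0) hχ
    rwa [hχend, show i + (k - i - (k - i)) = i by omega,
      parityLevel_eq_of_mod_two_eq g (show (m + (k - i)) % 2 = (i + 1) % 2 by omega)] at this

section ShortestPath

variable (hp : g.IsAltSeq p L 0) (hpL : g.parityLevel L (p L) = L) (hiL : i ≤ L)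
include hp hpL hiL

lemma add_le_tenacity_or_parityLevel_succ_add_le :
    ((i + L : ℕ) : ℕ∞) ≤ g.tenacity (p L) ∨
      g.parityLevel (i + 1) (p i) + i ≤ g.tenacity (p L) := by
  rw [← g.parityLevel_add_parityLevel_succ L, hpL]
  rcases eq_or_ne (g.parityLevel (L + 1) (p L)) ⊤ with htop | htop
  · simp [htop]
  lift g.parityLevel (L + 1) (p L) to ℕ using htop with lam hlam
  obtain ⟨s, hs0, hs, hsL, -⟩ := exists_isAltSeq_of_parityLevel_eq hlam.symm
  obtain ⟨m, hm, k, hik, hkL, -, ⟨-, hlen⟩ | ⟨-, hlen⟩⟩ :=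
    exists_hit_parityLevel_le hp hs0 hs ⟨L, hiL, le_rfl, hsL⟩
  · rw [hpL] at hlen
    norm_cast at hlen ⊢
    omega
  · refine .inr ?_
    calc g.parityLevel (i + 1) (p i) + i ≤ ((m + (k - i) : ℕ) : ℕ∞) + i := by gcongr
      _ ≤ L + lam := by norm_cast; omega

lemma tenacity_lt_of_parityLevel_lt (hlt : g.parityLevel i (p i) < i) :
    g.tenacity (p i) < ((i + L : ℕ) : ℕ∞) := by
  rw [← g.parityLevel_add_parityLevel_succ i]
  lift g.parityLevel i (p i) to ℕ using ne_top_of_lt hlt with j hj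
  have hji : j < i := by exact_mod_cast hlt
  obtain ⟨q, hq0, hq, hqi, hjpar⟩ := exists_isAltSeq_of_parityLevel_eq hj.symm
  obtain ⟨m, hm, k, hik, hkL, hmk, ⟨-, hlen⟩ | ⟨hpar, hlen⟩⟩ :=
    exists_hit_parityLevel_le hp hq0 hq ⟨i, le_rfl, hiL, hqi⟩
  · rw [hpL] at hlen
    norm_cast at hlen
    omega
  · have hmj : m < j := by
      refine lt_of_le_of_ne hm fun hmj => hpar ?_
      have : k = i := hp.1 (Set.mem_Iic.mpr hkL) (Set.mem_Iic.mpr hiL) (by rw [← hmk, hmj, hqi])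
      omega
    calc (j : ℕ∞) + g.parityLevel (i + 1) (p i) ≤ j + ((m + (k - i) : ℕ) : ℕ∞) := by gcongr
      _ < ((i + L : ℕ) : ℕ∞) := by norm_cast; omega

variable (hp0 : g.unmatched (p 0)) (ht : g.tenacity (p L) < g.tenacity (p i))
include hp0 ht

lemma le_parityLevel_succ_of_tenacity_lt : (i : ℕ∞) ≤ g.parityLevel (i + 1) (p i) := by
  by_contra! hlt
  lift g.parityLevel (i + 1) (p i) to ℕ using ne_top_of_lt hlt with ν hν
  have hνi : ν < i := by exact_mod_cast hlt
  have hten : g.tenacity (p i) ≤ ((i + ν : ℕ) : ℕ∞) := by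
    rw [← g.parityLevel_add_parityLevel_succ i, ← hν]
    push_cast
    gcongr
    exact parityLevel_le hp0 (hp.mono hiL)
  rcases add_le_tenacity_or_parityLevel_succ_add_le hp hpL hiL with h | h
  · have := h.trans_lt (ht.trans_le hten)
    norm_cast at this
    omega
  · rw [← hν] at h
    have := h.trans_lt (ht.trans_le hten)
    norm_cast at this
    omega

lemma parityLevel_eq_of_tenacity_lt : g.parityLevel i (p i) = i := by
  refine (parityLevel_le hp0 (hp.mono hiL)).antisymm (not_lt.mp fun hlt => ?_)
  rcases add_le_tenacity_or_parityLevel_succ_add_le hp hpL hiL with h | h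
  · exact lt_asymm (h.trans_lt ht) (tenacity_lt_of_parityLevel_lt hp hpL hiL hlt)
  · have hν : g.parityLevel (i + 1) (p i) ≠ ⊤ := fun htop => by
      simp [htop, (ht.trans_le le_top).ne] at h
    rw [← g.parityLevel_add_parityLevel_succ i (p i), add_comm (g.parityLevel i (p i))] at ht
    have := h.trans_lt ht
    exact (lt_asymm hlt) ((ENat.add_lt_add_iff_left hν).mp this)

end ShortestPath

end MatchedGraph

/-- On an `evenlevel(v)` or `oddlevel(v)` path `p`, every vertex
`u` on `p` with `tenacity(u) > tenacity(v)` occurs at distance `minlevel(u)`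
from the unmatched endpoint of `p`. -/
theorem prefix_eq_minlevel_of_tenacity_gt (g : MatchedGraph V) (p : List V)
    (f v : V) (hp : g.IsEvenlevelPath p f v ∨ g.IsOddlevelPath p f v)
    (i : ℕ) (hi : i < p.length)
    (ht : g.tenacity v < g.tenacity (p.getD i f)) :
    (i : ℕ∞) = g.minlevel (p.getD i f) := by
  have hpath : g.AltPathFrom p f v := hp.elim (·.1) (·.1)
  have hpL := g.parityLevel_eq_of_isEvenlevelPath_or_isOddlevelPath hp
  have hf : g.unmatched (p.getD 0 f) := by rw [hpath.2.getD_zero]; exact hpath.1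
  rw [← hpath.2.getD_length_sub_one] at hpL ht
  have hiL : i ≤ p.length - 1 := by omega
  have hseq := hpath.2.isAltSeq
  rw [g.minlevel_eq_min_parityLevel i,
    MatchedGraph.parityLevel_eq_of_tenacity_lt hseq hpL hiL hf ht,
    min_eq_left (MatchedGraph.le_parityLevel_succ_of_tenacity_lt hseq hpL hiL hf ht)]
end

section
/- Let (u, v) be a matched edge of eligible tenacity (t_m <= tenacity(u,v) < l_m) and let f be an unmatched vertex. Then u has both an evenlevel(u) path and an oddlevel(u) path starting at f if and only if v has both an evenlevel(v) path and an oddlevel(v) path starting at f. -/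
/-! For a matched edge `(u, v)`, an even alternating path from an unmatched vertex to `u` must
end with the matched edge `vu` (its last edge has odd index), so deleting `u` leaves an odd
alternating path to `v`. Conversely, an odd alternating path to `v` cannot pass through `u`, so it
extends by the matched edge to an even path to `u`. This shifts lengths by exactly one, hence
`evenlevel u = oddlevel v + 1`, and it maps `evenlevel(u)` paths from `f` onto `oddlevel(v)` paths
from `f`. Applying this to both orientations of the edge gives the equivalence. -/

open scoped Classical

universe u

variable {V : Type u}

namespace MatchedGraph

variable {g : MatchedGraph V} {p q : List V} {b f u v : V}

lemma AltPath.ne_nil (hp : g.AltPath p b v) : p ≠ [] := by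
  rintro rfl
  simp [AltPath] at hp

lemma AltPath.getD_zero_s6 (hp : g.AltPath p b v) : p.getD 0 b = b := by
  obtain ⟨hhead, -⟩ := hp
  cases p <;> simp_all

lemma AltPath.getD_length_sub_one_s6 (hp : g.AltPath p b v) : p.getD (p.length - 1) b = v := by
  have hne := hp.ne_nil
  rw [List.getD_eq_getElem _ _ (by simpa [List.length_pos_iff] using hne),
    ← List.getLast_eq_getElem hne]
  simpa [List.getLast?_eq_some_getLast hne] using hp.2.1

lemma AltPath.getD_injOn (hp : g.AltPath p b v) {i j : ℕ} (hi : i < p.length)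
    (hj : j < p.length) (hij : p.getD i b = p.getD j b) : i = j := by
  rw [List.getD_eq_getElem _ _ hi, List.getD_eq_getElem _ _ hj] at hij
  exact hp.2.2.1.getElem_inj_iff.1 hij

lemma AltPath.concat (hp : g.AltPath p b v) (hu : u ∉ p) (hadj : g.adj v u)
    (hM : g.M v u ↔ (p.length - 1) % 2 = 1) : g.AltPath (p ++ [u]) b u := by
  have hne := hp.ne_nil
  have hlast := hp.getD_length_sub_one_s6
  obtain ⟨hhead, -, hnodup, hedge⟩ := hp
  refine ⟨by simp [List.head?_append, hhead], by simp,
    List.nodup_append.2 ⟨hnodup, by simp, by grind⟩, fun i hi => ?_⟩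
  have hpos : 0 < p.length := List.length_pos_iff.2 hne
  simp only [List.length_append, List.length_singleton] at hi
  rcases Nat.lt_or_ge (i + 1) p.length with hi' | hi'
  · rw [List.getD_append _ _ _ _ (by omega), List.getD_append _ _ _ _ hi']
    exact hedge i hi'
  · obtain rfl : i = p.length - 1 := by omega
    rw [List.getD_append _ _ _ _ (by omega), hlast, List.getD_append_right _ _ _ _ hi']
    simpa [show p.length - 1 + 1 - p.length = 0 by omega] using ⟨hadj, hM⟩

lemma AltPath.of_concat (hp : g.AltPath (q ++ [u]) b u) (hq : q ≠ []) :
    g.AltPath q b (q.getD (q.length - 1) b) := by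
  obtain ⟨hhead, -, hnodup, hedge⟩ := hp
  have hpos := List.length_pos_iff.2 hq
  refine ⟨by rwa [List.head?_append_of_ne_nil _ hq] at hhead, ?_,
    (List.nodup_append.1 hnodup).1, fun i hi => ?_⟩
  · rw [List.getLast?_eq_some_getLast hq, List.getLast_eq_getElem,
      List.getD_eq_getElem _ _ (by omega)]
  · have hedge_i := hedge i (by simp; omega)
    rwa [List.getD_append _ _ _ _ (by omega), List.getD_append _ _ _ _ hi] at hedge_i

lemma AltPathFrom.not_mem_of_matched (hq : g.AltPathFrom q f v) (hodd : Odd (q.length - 1))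
    (hm : g.M u v) : u ∉ q := by
  intro hu
  obtain ⟨i, hi, hqi⟩ := List.mem_iff_getElem.1 hu
  rw [← List.getD_eq_getElem _ f hi] at hqi
  obtain ⟨hf, hq⟩ := hq
  have hL := Nat.odd_iff.1 hodd
  have hpartner : ∀ j, j < q.length → q.getD j f = v → j = q.length - 1 := fun j hj hj' =>
    hq.getD_injOn hj (by omega) (hj'.trans hq.getD_length_sub_one_s6.symm)
  have hiL : i ≠ q.length - 1 := by
    rintro rfl
    exact g.loopless v (g.M_sub _ _ (by rwa [hq.getD_length_sub_one_s6] at hqi ▸ hm))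
  -- The matched edge of `q` at `u` must join it to `v`, the last vertex, so `u` would be
  -- second to last; but the last edge of an odd alternating path is unmatched.
  rcases Nat.even_or_odd i with heven | hodd_i
  · obtain ⟨k, rfl⟩ : ∃ k, i = k + 1 := by
      rcases i with _ | k
      · exact absurd (hqi.symm.trans hq.getD_zero_s6 ▸ hm) (hf v)
      · exact ⟨k, rfl⟩
    have hM : g.M (q.getD k f) u := hqi ▸ ((hq.2.2.2 k (by omega)).2.2 (by grind))
    have := hpartner k (by omega) (g.M_matching _ _ _ hm (g.M_symm _ _ hM)).symm
    omega
  · have hM : g.M u (q.getD (i + 1) f) :=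
      hqi ▸ (hq.2.2.2 i (by omega)).2.2 (Nat.odd_iff.1 hodd_i)
    have := hpartner (i + 1) (by omega) (g.M_matching _ _ _ hm hM).symm
    grind

lemma AltPathFrom.concat_of_matched (hq : g.AltPathFrom q f v) (hodd : Odd (q.length - 1))
    (hm : g.M u v) : g.AltPathFrom (q ++ [u]) f u ∧ Even ((q ++ [u]).length - 1) := by
  refine ⟨⟨hq.1, hq.2.concat (hq.not_mem_of_matched hodd hm) (g.M_sub _ _ (g.M_symm _ _ hm))
    (iff_of_true (g.M_symm _ _ hm) (Nat.odd_iff.1 hodd))⟩, ?_⟩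
  have := Nat.odd_iff.1 hodd
  rw [List.length_append, List.length_singleton, Nat.add_sub_cancel, Nat.even_iff]
  omega

lemma AltPathFrom.eq_concat_of_matched (hp : g.AltPathFrom p f u) (heven : Even (p.length - 1))
    (hm : g.M u v) : ∃ q, g.AltPathFrom q f v ∧ Odd (q.length - 1) ∧ p = q ++ [u] := by
  obtain ⟨hf, hp⟩ := hp
  obtain ⟨q, rfl⟩ := List.getLast?_eq_some_iff.1 hp.2.1
  simp only [List.length_append, List.length_singleton, Nat.add_sub_cancel] at heven
  have hq : q ≠ [] := by
    rintro rfl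
    have hu : u = f := by simpa using hp.getD_zero_s6
    exact hf v (hu ▸ hm)
  have hlen : 2 ≤ q.length := by
    have := List.length_pos_iff.2 hq
    grind
  have hM := (hp.2.2.2 (q.length - 1) (by simp; omega)).2.2 (by grind)
  rw [List.getD_append _ _ _ _ (by omega), List.getD_append_right _ _ _ _ (by omega),
    show q.length - 1 + 1 - q.length = 0 by omega] at hM
  have hpred : q.getD (q.length - 1) f = v := (g.M_matching _ _ _ hm (g.M_symm _ _ hM)).symm
  exact ⟨q, ⟨hf, hpred ▸ hp.of_concat hq⟩, by grind, rfl⟩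

lemma cast_length_concat_sub_one (hq : q ≠ []) (u : V) :
    (((q ++ [u]).length - 1 : ℕ) : ℕ∞) = ((q.length - 1 : ℕ) : ℕ∞) + 1 := by
  have := List.length_pos_iff.2 hq
  norm_cast
  simp only [List.length_append, List.length_singleton]
  omega

lemma evenlevel_eq_oddlevel_add_one (hm : g.M u v) : g.evenlevel u = g.oddlevel v + 1 := by
  rw [evenlevel, oddlevel, ENat.sInf_add]
  refine le_antisymm (le_iInf₂ ?_) (le_sInf ?_)
  · rintro _ ⟨q, f, hq, hodd, rfl⟩
    obtain ⟨hqu, heven⟩ := hq.concat_of_matched hodd hm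
    exact sInf_le ⟨q ++ [u], f, hqu, heven, (cast_length_concat_sub_one hq.2.ne_nil u).symm⟩
  · rintro _ ⟨p, f, hp, heven, rfl⟩
    obtain ⟨q, hq, hodd, rfl⟩ := hp.eq_concat_of_matched heven hm
    exact iInf₂_le_of_le _ ⟨q, f, hq, hodd, rfl⟩ (cast_length_concat_sub_one hq.2.ne_nil u).ge

lemma exists_isEvenlevelPath_iff_exists_isOddlevelPath (hm : g.M u v) :
    (∃ p, g.IsEvenlevelPath p f u) ↔ ∃ q, g.IsOddlevelPath q f v := by
  constructor
  · rintro ⟨p, hp, heven, hlen⟩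
    obtain ⟨q, hq, hodd, rfl⟩ := hp.eq_concat_of_matched heven hm
    refine ⟨q, hq, hodd, ENat.add_left_injective_of_ne_top ENat.one_ne_top ?_⟩
    simp only
    rw [← cast_length_concat_sub_one hq.2.ne_nil, hlen, evenlevel_eq_oddlevel_add_one hm]
  · rintro ⟨q, hq, hodd, hlen⟩
    obtain ⟨hqu, heven⟩ := hq.concat_of_matched hodd hm
    refine ⟨q ++ [u], hqu, heven, ?_⟩
    rw [cast_length_concat_sub_one hq.2.ne_nil, hlen, evenlevel_eq_oddlevel_add_one hm]

end MatchedGraph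

theorem mem_Vtf_iff_of_matched_general (g : MatchedGraph V) (u v f : V)
    (hm : g.M u v) :
    ((∃ p, g.IsEvenlevelPath p f u) ∧ (∃ p, g.IsOddlevelPath p f u)) ↔
      ((∃ p, g.IsEvenlevelPath p f v) ∧ (∃ p, g.IsOddlevelPath p f v)) := by
  rw [MatchedGraph.exists_isEvenlevelPath_iff_exists_isOddlevelPath hm,
    MatchedGraph.exists_isEvenlevelPath_iff_exists_isOddlevelPath (g.M_symm u v hm)]
  exact and_comm

/-- For a matched edge `(u, v)` of eligible tenacity and an
unmatched vertex `f`: `u` has both an `evenlevel(u)` and an `oddlevel(u)` path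
starting at `f` iff `v` has both an `evenlevel(v)` and an `oddlevel(v)` path
starting at `f`. -/
theorem mem_Vtf_iff_of_matched (g : MatchedGraph V) (u v f : V)
    (hm : g.M u v) (hf : g.unmatched f)
    (h1 : g.tm ≤ g.etenacity u v) (h2 : g.etenacity u v < g.lm) :
    ((∃ p, g.IsEvenlevelPath p f u) ∧ (∃ p, g.IsOddlevelPath p f u)) ↔
      ((∃ p, g.IsEvenlevelPath p f v) ∧ (∃ p, g.IsOddlevelPath p f v)) :=
  mem_Vtf_iff_of_matched_general g u v f hm
end
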